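/- arXiv:2008.03600 — 2 statements merged into one kernel-verified Lean document; each statement's English description precedes it below -/
import Mathlib

section
/- Quantile change-of-variables identity: Let ξ be a real random variable with E|ξ|^q < ∞ for some q ≥ 1, let Q be the generalized inverse of the tail function x ↦ Pr(|ξ| ≥ x), and let G be the inverse of the function x ↦ ∫₀^x Q(u) du on [0, ‖ξ‖₁]. Then ∫₀^{‖ξ‖₁} (Q ∘ G(u))^{q−1} du = ∫₀¹ Q(v)^q dv = E|ξ|^q. -/
open MeasureTheory

noncomputable section

/-- The generalized inverse `Q` of the tail function `x ↦ Pr(|X| ≥ x)`: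
`Q(u) = inf {x ≥ 0 : Pr(|X| ≥ x) ≤ u}`. -/
def tailQuantile {Ω : Type*} [MeasurableSpace Ω] (μ : Measure Ω) (X : Ω → ℝ)
    (u : ℝ) : ℝ :=
  sInf {x : ℝ | 0 ≤ x ∧ (μ {ω | x ≤ |X ω|}).toReal ≤ u}

/-- The primitive `x ↦ ∫₀^x Q(u) du` of the quantile function. -/
def quantilePrimitive {Ω : Type*} [MeasurableSpace Ω] (μ : Measure Ω) (X : Ω → ℝ)
    (x : ℝ) : ℝ :=
  ∫ u in (0 : ℝ)..x, tailQuantile μ X u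

/-- The generalized inverse `G` of `x ↦ ∫₀^x Q(u) du`. -/
def quantilePrimitiveInv {Ω : Type*} [MeasurableSpace Ω] (μ : Measure Ω) (X : Ω → ℝ)
    (y : ℝ) : ℝ :=
  sInf {x : ℝ | 0 ≤ x ∧ y ≤ quantilePrimitive μ X x}

/-!
`Q` is the quantile function of `|ξ|`: for `v ∈ (0, 1]` and `x ≥ 0`, `Q v ≤ x` iff
`P(|ξ| > x) ≤ v`, so `Q` pushes Lebesgue measure on `(0, 1]` forward to the law of `|ξ|`.
This gives `∫₀¹ Q^q = E|ξ|^q`, and also `F 1 = ∫₀¹ Q = E|ξ|` for `F x = ∫₀^x Q`.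
Since `F` is continuous and nondecreasing, `G u ≤ x` iff `u ≤ F x`, so `G` pushes Lebesgue
measure on `(0, F 1]` forward to `Q(v) dv` on `(0, 1]`; hence
`∫₀^{F 1} (Q ∘ G)^{q-1} = ∫₀¹ Q · Q^{q-1}`.
-/

open Set Filter Topology

def lowerInverse (F : ℝ → ℝ) (y : ℝ) : ℝ :=
  sInf {x | 0 ≤ x ∧ y ≤ F x}

section LowerInverse

variable {F : ℝ → ℝ}

lemma lowerInverse_nonneg (F : ℝ → ℝ) (y : ℝ) : 0 ≤ lowerInverse F y :=
  Real.sInf_nonneg fun _ hx => hx.1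

lemma lowerInverse_le_iff (hF : Continuous F) (hmono : Monotone F) {b u x : ℝ} (hb : 0 ≤ b)
    (hub : u ≤ F b) (hx : 0 ≤ x) : lowerInverse F u ≤ x ↔ u ≤ F x := by
  have hbdd : BddBelow {x | 0 ≤ x ∧ u ≤ F x} := ⟨0, fun _ hy => hy.1⟩
  refine ⟨fun h => ?_, fun h => csInf_le hbdd ⟨hx, h⟩⟩
  have hclosed : IsClosed {x | 0 ≤ x ∧ u ≤ F x} :=
    isClosed_Ici.inter (isClosed_Ici.preimage hF)
  exact (hclosed.csInf_mem ⟨b, hb, hub⟩ hbdd).2.trans (hmono h)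

lemma monotoneOn_lowerInverse (hF : Continuous F) (hmono : Monotone F) {b : ℝ} (hb : 0 ≤ b) :
    MonotoneOn (lowerInverse F) (Iic (F b)) := fun _ hu u' hu' huu' =>
  (lowerInverse_le_iff hF hmono hb hu (lowerInverse_nonneg F u')).2 <|
    huu'.trans ((lowerInverse_le_iff hF hmono hb hu' (lowerInverse_nonneg F u')).1 le_rfl)

lemma aemeasurable_lowerInverse {μ : Measure ℝ} (hF : Continuous F) (hmono : Monotone F)
    {b : ℝ} (hb : 0 ≤ b) : AEMeasurable (lowerInverse F) (μ.restrict (Ioc 0 (F b))) :=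
  aemeasurable_restrict_of_monotoneOn measurableSet_Ioc
    ((monotoneOn_lowerInverse hF hmono hb).mono Ioc_subset_Iic_self)

end LowerInverse

section Primitive

variable {f : ℝ → ℝ}

lemma monotone_primitive_of_nonneg (hf : Integrable f) (hf0 : 0 ≤ f) :
    Monotone fun x => ∫ u in (0 : ℝ)..x, f u := fun a b hab => by
  have hsub : (∫ u in (0 : ℝ)..b, f u) - ∫ u in (0 : ℝ)..a, f u = ∫ u in a..b, f u :=
    intervalIntegral.integral_interval_sub_left hf.intervalIntegrable hf.intervalIntegrable
  have hnonneg : 0 ≤ ∫ u in a..b, f u := intervalIntegral.integral_nonneg hab fun u _ => hf0 u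
  exact sub_nonneg.1 (hsub ▸ hnonneg)

lemma continuous_primitive_of_integrable (hf : Integrable f) :
    Continuous fun x => ∫ u in (0 : ℝ)..x, f u :=
  intervalIntegral.continuous_primitive (fun _ _ => hf.intervalIntegrable) 0

theorem map_lowerInverse_primitive (hf : Integrable f) (hf0 : 0 ≤ f) {b : ℝ} (hb : 0 ≤ b) :
    (volume.restrict (Ioc 0 (∫ u in (0 : ℝ)..b, f u))).map
        (lowerInverse fun x => ∫ u in (0 : ℝ)..x, f u) =
      (volume.restrict (Ioc 0 b)).withDensity fun v => ENNReal.ofReal (f v) := by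
  set F : ℝ → ℝ := fun x => ∫ u in (0 : ℝ)..x, f u
  have hF : Continuous F := continuous_primitive_of_integrable hf
  have hmono : Monotone F := monotone_primitive_of_nonneg hf hf0
  have : IsFiniteMeasure ((volume.restrict (Ioc 0 b)).withDensity fun v => ENNReal.ofReal (f v))
    := isFiniteMeasure_withDensity_ofReal hf.restrict.2
  refine Measure.ext_of_Iic _ _ fun x => ?_
  rw [Measure.map_apply_of_aemeasurable (aemeasurable_lowerInverse hF hmono hb)
      measurableSet_Iic,
    Measure.restrict_apply' measurableSet_Ioc, withDensity_apply _ measurableSet_Iic,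
    Measure.restrict_restrict measurableSet_Iic, inter_comm (Iic x), Ioc_inter_Iic]
  rcases lt_or_ge x 0 with hx | hx
  · have hempty : lowerInverse F ⁻¹' Iic x = ∅ :=
      eq_empty_of_forall_notMem fun u hu => hx.not_ge ((lowerInverse_nonneg F u).trans hu)
    rw [hempty, empty_inter, measure_empty, Ioc_eq_empty (min_le_of_right_le hx.le).not_gt,
      Measure.restrict_empty, lintegral_zero_measure]
  · have hset : lowerInverse F ⁻¹' Iic x ∩ Ioc 0 (F b) = Ioc 0 (F (min b x)) := by
      ext u
      simp only [mem_inter_iff, mem_preimage, mem_Iic, mem_Ioc, hmono.map_min, le_min_iff]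
      constructor
      · rintro ⟨hGu, hu0, hub⟩
        exact ⟨hu0, hub, (lowerInverse_le_iff hF hmono hb hub hx).1 hGu⟩
      · rintro ⟨hu0, hub, hux⟩
        exact ⟨(lowerInverse_le_iff hF hmono hb hub hx).2 hux, hu0, hub⟩
    rw [hset, Real.volume_Ioc, sub_zero, ← ofReal_integral_eq_lintegral_ofReal hf.integrableOn
      (ae_of_all _ hf0), ← intervalIntegral.integral_of_le (le_min hb hx)]

end Primitive

section TailQuantile

variable {Ω : Type*} [MeasurableSpace Ω] (μ : Measure Ω) (ξ : Ω → ℝ)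

lemma tailQuantile_nonneg (v : ℝ) : 0 ≤ tailQuantile μ ξ v :=
  Real.sInf_nonneg fun _ hx => hx.1

lemma tailQuantile_of_neg {v : ℝ} (hv : v < 0) : tailQuantile μ ξ v = 0 := by
  have hempty : {x : ℝ | 0 ≤ x ∧ (μ {ω | x ≤ |ξ ω|}).toReal ≤ v} = ∅ :=
    eq_empty_of_forall_notMem fun _ hx => hv.not_ge (hx.2.trans' ENNReal.toReal_nonneg)
  rw [tailQuantile, hempty, Real.sInf_empty]

lemma tailQuantile_of_one_le [IsZeroOrProbabilityMeasure μ] {v : ℝ} (hv : 1 ≤ v) :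
    tailQuantile μ ξ v = 0 :=
  le_antisymm (csInf_le ⟨0, fun _ hx => hx.1⟩ ⟨le_rfl, ENNReal.toReal_le_of_le_ofReal
    (zero_le_one.trans hv) (prob_le_one.trans (by simpa using hv))⟩) (tailQuantile_nonneg μ ξ v)

variable {μ ξ}

lemma exists_measure_abs_ge_le [IsFiniteMeasure μ] (hξ : Measurable ξ) {v : ℝ} (hv : 0 < v) :
    ∃ x, 0 ≤ x ∧ (μ {ω | x ≤ |ξ ω|}).toReal ≤ v := by
  have hempty : ⋂ x : ℝ, {ω | x ≤ |ξ ω|} = ∅ :=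
    eq_empty_of_forall_notMem fun ω hω => (lt_add_one |ξ ω|).not_ge (mem_iInter.1 hω _)
  have hlim : Tendsto (μ ∘ fun x : ℝ => {ω | x ≤ |ξ ω|}) atTop (𝓝 0) := by
    simpa [hempty] using tendsto_measure_iInter_atTop (s := fun x => {ω | x ≤ |ξ ω|})
      (fun _ => (measurableSet_le measurable_const hξ.abs).nullMeasurableSet)
      (fun _ _ hxy _ hω => hxy.trans hω) ⟨0, measure_ne_top _ _⟩
  obtain ⟨x, hx0, hx⟩ :=
    ((eventually_ge_atTop 0).and (hlim.eventually_le_const (ENNReal.ofReal_pos.2 hv))).exists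
  exact ⟨x, hx0, ENNReal.toReal_le_of_le_ofReal hv.le hx⟩

lemma tailQuantile_le_iff [IsFiniteMeasure μ] (hξ : Measurable ξ) {v x : ℝ} (hv : 0 < v)
    (hx : 0 ≤ x) : tailQuantile μ ξ v ≤ x ↔ (μ {ω | x < |ξ ω|}).toReal ≤ v := by
  refine ⟨fun h => ?_, fun h => le_of_forall_pos_le_add fun ε hε => ?_⟩
  · have hle : ∀ y, x < y → μ {ω | y ≤ |ξ ω|} ≤ ENNReal.ofReal v := fun y hy => by
      obtain ⟨z, hz, hzy⟩ :=
        exists_lt_of_csInf_lt (exists_measure_abs_ge_le hξ hv) (h.trans_lt hy)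
      exact (measure_mono fun ω hω => hzy.le.trans hω).trans
        ((ENNReal.le_ofReal_iff_toReal_le (measure_ne_top _ _) hv.le).2 hz.2)
    obtain ⟨a, ha, hxa, hlim⟩ := exists_seq_strictAnti_tendsto x
    have hunion : {ω | x < |ξ ω|} = ⋃ n, {ω | a n ≤ |ξ ω|} := by
      simp_rw [← mem_Ioi, ← iUnion_Ici_eq_Ioi_of_lt_of_tendsto hxa hlim, mem_iUnion, mem_Ici]
      ext; simp
    have hmono : Monotone fun n => {ω | a n ≤ |ξ ω|} := fun _ _ hmn _ hω =>
      (ha.antitone hmn).trans hω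
    rw [hunion, hmono.measure_iUnion]
    exact ENNReal.toReal_le_of_le_ofReal hv.le (iSup_le fun n => hle _ (hxa n))
  · refine csInf_le ⟨0, fun _ hy => hy.1⟩ ⟨by positivity, h.trans' ?_⟩
    exact ENNReal.toReal_mono (measure_ne_top _ _)
      (measure_mono fun ω (hω : x + ε ≤ |ξ ω|) => show x < |ξ ω| by linarith)

lemma antitoneOn_tailQuantile [IsFiniteMeasure μ] (hξ : Measurable ξ) :
    AntitoneOn (tailQuantile μ ξ) (Ioi 0) := fun _ hv _ _ hvw =>
  csInf_le_csInf ⟨0, fun _ hx => hx.1⟩ (exists_measure_abs_ge_le hξ hv)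
    fun _ hx => ⟨hx.1, hx.2.trans hvw⟩

end TailQuantile

lemma Real.volume_Ioc_inter_Ici {a b t : ℝ} (hat : a ≤ t) :
    volume (Ioc a b ∩ Ici t) = ENNReal.ofReal (b - t) :=
  le_antisymm (Real.volume_Icc ▸ measure_mono fun _ hv => ⟨hv.2, hv.1.2⟩)
    (Real.volume_Ioc ▸ measure_mono fun _ hv => ⟨⟨hat.trans_lt hv.1, hv.2⟩, hv.1.le⟩)

section QuantileTransform

variable {Ω : Type*} [MeasurableSpace Ω] {μ : Measure Ω} [IsProbabilityMeasure μ]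
  {ξ : Ω → ℝ}

lemma aemeasurable_tailQuantile (hξ : Measurable ξ) :
    AEMeasurable (tailQuantile μ ξ) (volume.restrict (Ioc 0 1)) :=
  aemeasurable_restrict_of_antitoneOn measurableSet_Ioc
    ((antitoneOn_tailQuantile hξ).mono Ioc_subset_Ioi_self)

theorem map_tailQuantile (hξ : Measurable ξ) :
    (volume.restrict (Ioc 0 1)).map (tailQuantile μ ξ) = μ.map fun ω => |ξ ω| := by
  refine Measure.ext_of_Iic _ _ fun x => ?_
  rw [Measure.map_apply_of_aemeasurable (aemeasurable_tailQuantile hξ) measurableSet_Iic,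
    Measure.map_apply hξ.abs measurableSet_Iic, Measure.restrict_apply' measurableSet_Ioc]
  rcases lt_or_ge x 0 with hx | hx
  · have hQ : tailQuantile μ ξ ⁻¹' Iic x = ∅ :=
      eq_empty_of_forall_notMem fun v hv => hx.not_ge ((tailQuantile_nonneg μ ξ v).trans hv)
    have habs : (fun ω => |ξ ω|) ⁻¹' Iic x = ∅ :=
      eq_empty_of_forall_notMem fun ω hω => hx.not_ge ((abs_nonneg (ξ ω)).trans hω)
    rw [hQ, habs, empty_inter, measure_empty, measure_empty]
  set t := (μ {ω | x < |ξ ω|}).toReal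
  have hset : tailQuantile μ ξ ⁻¹' Iic x ∩ Ioc 0 1 = Ioc 0 1 ∩ Ici t := by
    ext v
    simp only [mem_inter_iff, mem_preimage, mem_Iic, mem_Ici]
    exact and_comm.trans (and_congr_right fun hv => tailQuantile_le_iff hξ hv.1 hx)
  have hcompl : (fun ω => |ξ ω|) ⁻¹' Iic x = {ω | x < |ξ ω|}ᶜ := by
    ext; simp
  rw [hset, Real.volume_Ioc_inter_Ici ENNReal.toReal_nonneg, hcompl,
    prob_compl_eq_one_sub (measurableSet_lt measurable_const hξ.abs),
    ENNReal.ofReal_sub _ ENNReal.toReal_nonneg, ENNReal.ofReal_one,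
    ENNReal.ofReal_toReal (measure_ne_top _ _)]

theorem setIntegral_comp_tailQuantile (hξ : Measurable ξ) {g : ℝ → ℝ} (hg : Measurable g) :
    ∫ v in Ioc 0 1, g (tailQuantile μ ξ v) = ∫ ω, g |ξ ω| ∂μ := by
  rw [← integral_map (aemeasurable_tailQuantile hξ) hg.aestronglyMeasurable,
    map_tailQuantile hξ, integral_map hξ.abs.aemeasurable hg.aestronglyMeasurable]

lemma integrable_tailQuantile (hξ : Measurable ξ) (hint : Integrable ξ μ) :
    Integrable (tailQuantile μ ξ) := by
  have hmap : Integrable id ((volume.restrict (Ioc 0 1)).map (tailQuantile μ ξ)) := by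
    rw [map_tailQuantile hξ, integrable_map_measure aestronglyMeasurable_id hξ.abs.aemeasurable]
    exact hint.abs
  rw [integrable_map_measure aestronglyMeasurable_id (aemeasurable_tailQuantile hξ)] at hmap
  refine ((integrableOn_Icc_iff_integrableOn_Ioc enorm_ne_top).2 hmap)
    |>.integrable_of_forall_notMem_eq_zero fun v hv => ?_
  rcases lt_or_ge v 0 with hv0 | hv0
  · exact tailQuantile_of_neg μ ξ hv0
  · exact tailQuantile_of_one_le μ ξ (not_le.1 fun hv1 => hv ⟨hv0, hv1⟩).le

lemma quantilePrimitive_one (hξ : Measurable ξ) :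
    quantilePrimitive μ ξ 1 = ∫ ω, |ξ ω| ∂μ := by
  rw [quantilePrimitive, intervalIntegral.integral_of_le zero_le_one]
  exact setIntegral_comp_tailQuantile hξ measurable_id

theorem map_quantilePrimitiveInv (hξ : Measurable ξ) (hint : Integrable ξ μ) :
    (volume.restrict (Ioc 0 (quantilePrimitive μ ξ 1))).map (quantilePrimitiveInv μ ξ) =
      (volume.restrict (Ioc 0 1)).withDensity fun v => ENNReal.ofReal (tailQuantile μ ξ v) :=
  map_lowerInverse_primitive (integrable_tailQuantile hξ hint) (tailQuantile_nonneg μ ξ)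
    zero_le_one

theorem setIntegral_comp_quantilePrimitiveInv (hξ : Measurable ξ) (hint : Integrable ξ μ)
    {g : ℝ → ℝ} (hg : Measurable g) :
    ∫ u in Ioc 0 (quantilePrimitive μ ξ 1),
        g (tailQuantile μ ξ (quantilePrimitiveInv μ ξ u)) =
      ∫ v in Ioc 0 1, tailQuantile μ ξ v * g (tailQuantile μ ξ v) := by
  have hQ := integrable_tailQuantile hξ hint
  have hQ_meas := aemeasurable_tailQuantile (μ := μ) hξ
  have hG : AEMeasurable (quantilePrimitiveInv μ ξ)
      (volume.restrict (Ioc 0 (quantilePrimitive μ ξ 1))) :=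
    aemeasurable_lowerInverse (continuous_primitive_of_integrable hQ)
      (monotone_primitive_of_nonneg hQ (tailQuantile_nonneg μ ξ)) zero_le_one
  rw [← integral_map (f := fun v => g (tailQuantile μ ξ v)) hG,
    map_quantilePrimitiveInv hξ hint,
    integral_withDensity_eq_integral_toReal_smul₀ hQ_meas.ennreal_ofReal
      (ae_of_all _ fun _ => ENNReal.ofReal_lt_top)]
  · simp only [ENNReal.toReal_ofReal (tailQuantile_nonneg μ ξ _), smul_eq_mul]
  · rw [map_quantilePrimitiveInv hξ hint]
    exact (hg.comp_aemeasurable hQ_meas).aestronglyMeasurable.mono_ac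
      (withDensity_absolutelyContinuous _ _)

end QuantileTransform

/-- **Quantile change-of-variables identity**: if `E|ξ|^q < ∞` for some `q ≥ 1`, then
`∫₀^{‖ξ‖₁} (Q ∘ G(u))^{q−1} du = ∫₀¹ Q(v)^q dv = E|ξ|^q`, where `Q` is the generalized
inverse of the tail function of `ξ` and `G` the generalized inverse of `x ↦ ∫₀^x Q`. -/
theorem quantile_change_of_variables
    {Ω : Type*} [MeasurableSpace Ω] (μ : Measure Ω) [IsProbabilityMeasure μ]
    (ξ : Ω → ℝ) (q : ℝ) (hq : 1 ≤ q) (hmeas : Measurable ξ)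
    (hint : Integrable (fun ω => |ξ ω| ^ q) μ) :
    (∫ u in (0 : ℝ)..(∫ ω, |ξ ω| ∂μ),
        (tailQuantile μ ξ (quantilePrimitiveInv μ ξ u)) ^ (q - 1)) =
      (∫ v in (0 : ℝ)..1, (tailQuantile μ ξ v) ^ q) ∧
    (∫ v in (0 : ℝ)..1, (tailQuantile μ ξ v) ^ q) = ∫ ω, |ξ ω| ^ q ∂μ := by
  have hξ : Integrable ξ μ := (integrable_norm_iff hmeas.aestronglyMeasurable).1 <| by
    simpa using integrable_norm_rpow_of_le hmeas.aestronglyMeasurable zero_le_one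
      (zero_le_one.trans hq) hq (by simpa using hint)
  rw [intervalIntegral.integral_of_le zero_le_one]
  refine ⟨?_, setIntegral_comp_tailQuantile hmeas (measurable_id.pow_const q)⟩
  rw [intervalIntegral.integral_of_le (integral_nonneg fun _ => abs_nonneg _),
    ← quantilePrimitive_one hmeas,
    setIntegral_comp_quantilePrimitiveInv (g := (· ^ (q - 1))) hmeas hξ
      (measurable_id.pow_const _)]
  refine setIntegral_congr_fun measurableSet_Ioc fun v _ => ?_
  rw [← Real.rpow_one_add' (tailQuantile_nonneg μ ξ v) (by linarith), add_sub_cancel]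

end
end

section
/- Integral bound for the mixing counting function: Let (τ_k)_{k≥0} be a nonincreasing sequence of nonnegative reals and define H(u) = Σ_{k=0}^∞ 1{2u < τ_k} for u > 0. Then for every s > 0 and every M > 0, ∫₀^M H(u)^s du ≤ (1 ∨ s)/2 · Σ_{k=0}^∞ (k+1)^{s−1} τ_k. In particular, if τ_k ≤ c k^{-a} for all k ≥ 1 with a > s, then ∫₀^M H(u)^s du is bounded by a finite constant depending only on s, a, c, and τ₀. -/
/-!
Because `τ` is nonincreasing, `{k | 2u < τ k}` is an initial segment of `ℕ`, so `H(u)^s`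
telescopes into `∑ k, ((k+1)^s - k^s) 1{2u < τ k}`. Integrating term by term over `u > 0` gives
the layer-cake identity `∫ H^s = ∑ k, ((k+1)^s - k^s) τ k / 2`, and
`(k+1)^s - k^s ≤ (1 ∨ s) (k+1)^(s-1)` (Bernoulli's inequality for `s ≥ 1`, monotonicity of
`x ↦ x^(s-1)` for `s ≤ 1`). Under the decay hypothesis, `τ k ≤ max τ₀ (2^a c) (k+1)^(-a)` for all
`k`, and `∑ (k+1)^(s-1-a)` converges since `a > s`.
-/

open MeasureTheory

noncomputable section

/-- The mixing counting function `H(u) = Σ_{k=0}^∞ 1{2u < τ_k}`. -/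
def mixCount (τ : ℕ → ℝ) (u : ℝ) : ENNReal :=
  ∑' k : ℕ, if 2 * u < τ k then 1 else 0

open Set
open scoped ENNReal

theorem ENNReal.sum_range_tsub_of_monotone {f : ℕ → ℝ≥0∞} (hf : Monotone f) (h0 : f 0 = 0)
    (n : ℕ) : ∑ i ∈ Finset.range n, (f (i + 1) - f i) = f n := by
  induction n with
  | zero => simp [h0]
  | succ n ih => rw [Finset.sum_range_succ, ih, add_tsub_cancel_of_le (hf n.le_succ)]

theorem ENNReal.iSup_natCast_rpow {s : ℝ} (hs : 0 < s) : ⨆ n : ℕ, (n : ℝ≥0∞) ^ s = ∞ := by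
  rw [← (ENNReal.monotone_rpow_of_nonneg hs.le).map_iSup_of_continuousAt
    ENNReal.continuous_rpow_const.continuousAt (ENNReal.zero_rpow_of_pos hs),
    ENNReal.iSup_natCast, ENNReal.top_rpow_of_pos hs]

theorem IsLowerSet.tsum_indicator_one_rpow {S : Set ℕ} (hS : IsLowerSet S) {s : ℝ} (hs : 0 < s) :
    (∑' k, S.indicator 1 k : ℝ≥0∞) ^ s =
      ∑' k, S.indicator (fun k : ℕ => ((k : ℝ≥0∞) + 1) ^ s - (k : ℝ≥0∞) ^ s) k := by
  have telescope := ENNReal.sum_range_tsub_of_monotone (f := fun k : ℕ => (k : ℝ≥0∞) ^ s)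
    (fun m n hmn => ENNReal.rpow_le_rpow (by exact_mod_cast hmn) hs.le)
    (by simp [ENNReal.zero_rpow_of_pos hs])
  obtain rfl | ⟨n, rfl⟩ := hS.eq_univ_or_Iio
  · simp only [indicator_univ, Pi.one_apply, ENNReal.tsum_const_eq_top_of_ne_zero one_ne_zero,
      ENNReal.top_rpow_of_pos hs, ENNReal.tsum_eq_iSup_nat]
    simp only [Nat.cast_add, Nat.cast_one] at telescope
    simp only [telescope, ENNReal.iSup_natCast_rpow hs]
  · rw [← Finset.coe_range, ← sum_eq_tsum_indicator, ← sum_eq_tsum_indicator]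
    simpa using (telescope n).symm

theorem Real.add_one_rpow_sub_rpow_le_of_le_one {x s : ℝ} (hx : 0 ≤ x) (hs₀ : 0 < s)
    (hs₁ : s ≤ 1) : (x + 1) ^ s - x ^ s ≤ (x + 1) ^ (s - 1) := by
  have hy : 0 < x + 1 := by linarith
  have split : (x + 1) ^ s = (x + 1) ^ (s - 1) + x * (x + 1) ^ (s - 1) := by
    rw [Real.rpow_sub_one hy.ne']
    field_simp
    ring
  have hxs : x * (x + 1) ^ (s - 1) ≤ x ^ s := by
    rcases hx.eq_or_lt with rfl | hx₀
    · simp [Real.zero_rpow hs₀.ne']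
    · calc x * (x + 1) ^ (s - 1) ≤ x * x ^ (s - 1) :=
            mul_le_mul_of_nonneg_left
              (Real.rpow_le_rpow_of_nonpos hx₀ (by linarith) (by linarith)) hx
        _ = x ^ s := by rw [Real.rpow_sub_one hx₀.ne']; field_simp
  linarith

theorem Real.add_one_rpow_sub_rpow_le_of_one_le {x s : ℝ} (hx : 0 ≤ x) (hs : 1 ≤ s) :
    (x + 1) ^ s - x ^ s ≤ s * (x + 1) ^ (s - 1) := by
  have hy : 0 < x + 1 := by linarith
  have bernoulli := one_add_mul_self_le_rpow_one_add (s := -(x + 1)⁻¹)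
    (by rw [neg_le_neg_iff]; exact inv_le_one_of_one_le₀ (by linarith)) hs
  have hbase : 1 + -(x + 1)⁻¹ = x / (x + 1) := by field_simp; ring
  rw [hbase, Real.div_rpow hx hy.le, le_div_iff₀ (by positivity)] at bernoulli
  rw [Real.rpow_sub_one hy.ne']
  have hlhs : (1 + s * -(x + 1)⁻¹) * (x + 1) ^ s =
      (x + 1) ^ s - s * ((x + 1) ^ s / (x + 1)) := by
    field_simp
    ring
  linarith

theorem Real.add_one_rpow_sub_rpow_le {x s : ℝ} (hx : 0 ≤ x) (hs : 0 < s) :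
    (x + 1) ^ s - x ^ s ≤ max 1 s * (x + 1) ^ (s - 1) := by
  rcases le_total s 1 with h | h
  · rw [max_eq_left h, one_mul]
    exact Real.add_one_rpow_sub_rpow_le_of_le_one hx hs h
  · rw [max_eq_right h]
    exact Real.add_one_rpow_sub_rpow_le_of_one_le hx h

theorem ENNReal.natCast_add_one_rpow_sub_rpow_le {s : ℝ} (hs : 0 < s) (k : ℕ) :
    ((k : ℝ≥0∞) + 1) ^ s - (k : ℝ≥0∞) ^ s ≤
      ENNReal.ofReal (max 1 s * ((k : ℝ) + 1) ^ (s - 1)) := by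
  have hk : ((k : ℝ≥0∞) + 1) = ENNReal.ofReal ((k : ℝ) + 1) := by
    rw [ENNReal.ofReal_add k.cast_nonneg zero_le_one, ENNReal.ofReal_natCast, ENNReal.ofReal_one]
  rw [hk, ← ENNReal.ofReal_natCast, ENNReal.ofReal_rpow_of_nonneg (by positivity) hs.le,
    ENNReal.ofReal_rpow_of_nonneg k.cast_nonneg hs.le, ← ENNReal.ofReal_sub _ (by positivity)]
  exact ENNReal.ofReal_le_ofReal (Real.add_one_rpow_sub_rpow_le k.cast_nonneg hs)

theorem Real.summable_nat_add_one_rpow {p : ℝ} (hp : p < -1) :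
    Summable fun k : ℕ => ((k : ℝ) + 1) ^ p := by
  simpa using (summable_nat_add_iff 1).2 (Real.summable_nat_rpow.2 hp)

theorem le_mul_add_one_rpow_neg {τ : ℕ → ℝ} {a c τ₀ : ℝ} (ha : 0 ≤ a) (hc : 0 ≤ c)
    (h₀ : τ 0 ≤ τ₀) (hdecay : ∀ k : ℕ, 1 ≤ k → τ k ≤ c * (k : ℝ) ^ (-a)) (k : ℕ) :
    τ k ≤ max τ₀ (c * 2 ^ a) * ((k : ℝ) + 1) ^ (-a) := by
  rcases Nat.eq_zero_or_pos k with rfl | hk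
  · simpa using h₀.trans (le_max_left _ _)
  have hk₀ : (0 : ℝ) < k := by exact_mod_cast hk
  have hk₁ : (1 : ℝ) ≤ k := by exact_mod_cast hk
  have hshift : (k : ℝ) ^ (-a) ≤ 2 ^ a * ((k : ℝ) + 1) ^ (-a) :=
    calc (k : ℝ) ^ (-a) = 2 ^ a * (2 * (k : ℝ)) ^ (-a) := by
          rw [Real.mul_rpow zero_le_two hk₀.le, ← mul_assoc, ← Real.rpow_add two_pos,
            add_neg_cancel, Real.rpow_zero, one_mul]
      _ ≤ 2 ^ a * ((k : ℝ) + 1) ^ (-a) :=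
          mul_le_mul_of_nonneg_left
            (Real.rpow_le_rpow_of_nonpos (by positivity) (by linarith) (by linarith))
            (by positivity)
  calc τ k ≤ c * (k : ℝ) ^ (-a) := hdecay k hk
    _ ≤ c * 2 ^ a * ((k : ℝ) + 1) ^ (-a) := by
        rw [mul_assoc]; exact mul_le_mul_of_nonneg_left hshift hc
    _ ≤ max τ₀ (c * 2 ^ a) * ((k : ℝ) + 1) ^ (-a) :=
        mul_le_mul_of_nonneg_right (le_max_right _ _) (by positivity)

theorem tsum_ofReal_add_one_rpow_mul_le {s a C : ℝ} (hsa : s < a) (hC : 0 ≤ C) {τ : ℕ → ℝ}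
    (hτ : ∀ k : ℕ, τ k ≤ C * ((k : ℝ) + 1) ^ (-a)) :
    ∑' k : ℕ, ENNReal.ofReal (((k : ℝ) + 1) ^ (s - 1) * τ k) ≤
      ENNReal.ofReal (C * ∑' k : ℕ, ((k : ℝ) + 1) ^ (s - 1 - a)) := by
  rw [← tsum_mul_left, ENNReal.ofReal_tsum_of_nonneg (fun k => by positivity)
    ((Real.summable_nat_add_one_rpow (by linarith)).mul_left C)]
  refine ENNReal.tsum_le_tsum fun k => ENNReal.ofReal_le_ofReal ?_
  calc ((k : ℝ) + 1) ^ (s - 1) * τ k ≤ ((k : ℝ) + 1) ^ (s - 1) * (C * ((k : ℝ) + 1) ^ (-a)) :=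
        mul_le_mul_of_nonneg_left (hτ k) (by positivity)
    _ = C * ((k : ℝ) + 1) ^ (s - 1 - a) := by
        rw [sub_eq_add_neg (s - 1), Real.rpow_add (by positivity)]
        ring

theorem mixCount_eq_tsum_indicator (τ : ℕ → ℝ) (u : ℝ) :
    mixCount τ u = ∑' k, {k | 2 * u < τ k}.indicator 1 k := by
  simp [mixCount, indicator_apply]

theorem setLIntegral_Ioi_mixCount_rpow {s : ℝ} (hs : 0 < s) {τ : ℕ → ℝ} (hτ : Antitone τ) :
    ∫⁻ u in Ioi 0, mixCount τ u ^ s =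
      ∑' k : ℕ, (((k : ℝ≥0∞) + 1) ^ s - (k : ℝ≥0∞) ^ s) * ENNReal.ofReal (τ k / 2) := by
  have layer (u : ℝ) : mixCount τ u ^ s =
      ∑' k : ℕ, (Iio (τ k / 2)).indicator (fun _ => ((k : ℝ≥0∞) + 1) ^ s - (k : ℝ≥0∞) ^ s) u := by
    have hlower : IsLowerSet {k | 2 * u < τ k} := fun _ _ hba hb => hb.trans_le (hτ hba)
    rw [mixCount_eq_tsum_indicator, hlower.tsum_indicator_one_rpow hs]
    congr with k
    simp only [indicator_apply, mem_ofPred_eq, mem_Iio, lt_div_iff₀ (two_pos : (0 : ℝ) < 2),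
      mul_comm]
  simp_rw [layer]
  rw [lintegral_tsum fun k => (measurable_const.indicator measurableSet_Iio).aemeasurable]
  congr with k
  rw [lintegral_indicator_const measurableSet_Iio, Measure.restrict_apply measurableSet_Iio,
    Iio_inter_Ioi, Real.volume_Ioo, sub_zero]

theorem setLIntegral_Ioc_mixCount_rpow_le {s : ℝ} (hs : 0 < s) {τ : ℕ → ℝ} (hτ : Antitone τ)
    (M : ℝ) :
    ∫⁻ u in Ioc 0 M, mixCount τ u ^ s ≤
      ENNReal.ofReal (max 1 s / 2) * ∑' k : ℕ, ENNReal.ofReal (((k : ℝ) + 1) ^ (s - 1) * τ k) := by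
  calc ∫⁻ u in Ioc 0 M, mixCount τ u ^ s ≤ ∫⁻ u in Ioi 0, mixCount τ u ^ s :=
        lintegral_mono_set Ioc_subset_Ioi_self
    _ = ∑' k : ℕ, (((k : ℝ≥0∞) + 1) ^ s - (k : ℝ≥0∞) ^ s) * ENNReal.ofReal (τ k / 2) :=
        setLIntegral_Ioi_mixCount_rpow hs hτ
    _ ≤ ∑' k : ℕ, ENNReal.ofReal (max 1 s * ((k : ℝ) + 1) ^ (s - 1)) * ENNReal.ofReal (τ k / 2) :=
        ENNReal.tsum_le_tsum fun k =>
          mul_le_mul_left (ENNReal.natCast_add_one_rpow_sub_rpow_le hs k) _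
    _ = _ := by
        rw [← ENNReal.tsum_mul_left]
        congr with k
        rw [← ENNReal.ofReal_mul (by positivity), ← ENNReal.ofReal_mul (by positivity)]
        ring_nf

/-- **Integral bound for the mixing counting function.**
For a nonincreasing sequence `(τ_k)` of nonnegative reals and
`H(u) = Σ_k 1{2u < τ_k}`, for every `s > 0` and `M > 0`,
`∫₀^M H(u)^s du ≤ (1 ∨ s)/2 · Σ_k (k+1)^{s−1} τ_k`.
In particular, if `τ_k ≤ c k^{-a}` for `k ≥ 1` with `a > s`, the integral is bounded by
a finite constant depending only on `s, a, c` and `τ₀`. -/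
theorem mixing_counting_integral_bound (s : ℝ) (hs : 0 < s) :
    (∀ (τ : ℕ → ℝ), Antitone τ → (∀ k, 0 ≤ τ k) →
      ∀ M : ℝ, 0 < M →
        (∫⁻ u in Set.Ioc (0 : ℝ) M, (mixCount τ u) ^ s) ≤
          ENNReal.ofReal ((max 1 s) / 2) *
            ∑' k : ℕ, ENNReal.ofReal (((k : ℝ) + 1) ^ (s - 1) * τ k)) ∧
    (∀ a c τ0 : ℝ, s < a → 0 ≤ c → 0 ≤ τ0 →
      ∃ K : ℝ, ∀ (τ : ℕ → ℝ), Antitone τ → (∀ k, 0 ≤ τ k) → τ 0 ≤ τ0 →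
        (∀ k : ℕ, 1 ≤ k → τ k ≤ c * (k : ℝ) ^ (-a)) →
        ∀ M : ℝ, 0 < M →
          (∫⁻ u in Set.Ioc (0 : ℝ) M, (mixCount τ u) ^ s) ≤ ENNReal.ofReal K) := by
  refine ⟨fun τ hτ _ M _ => setLIntegral_Ioc_mixCount_rpow_le hs hτ M, ?_⟩
  intro a c τ0 hsa hc _
  set C := max τ0 (c * 2 ^ a)
  have hC : 0 ≤ C := le_max_of_le_right (by positivity)
  refine ⟨max 1 s / 2 * (C * ∑' k : ℕ, ((k : ℝ) + 1) ^ (s - 1 - a)), ?_⟩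
  intro τ hτ _ h₀ hdecay M _
  have hτC := le_mul_add_one_rpow_neg (by linarith) hc h₀ hdecay
  calc ∫⁻ u in Ioc 0 M, mixCount τ u ^ s
      ≤ ENNReal.ofReal (max 1 s / 2) *
          ∑' k : ℕ, ENNReal.ofReal (((k : ℝ) + 1) ^ (s - 1) * τ k) :=
        setLIntegral_Ioc_mixCount_rpow_le hs hτ M
    _ ≤ ENNReal.ofReal (max 1 s / 2) *
          ENNReal.ofReal (C * ∑' k : ℕ, ((k : ℝ) + 1) ^ (s - 1 - a)) :=
        mul_le_mul_right (tsum_ofReal_add_one_rpow_mul_le hsa hC hτC) _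
    _ = _ := (ENNReal.ofReal_mul (by positivity)).symm

end
end
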